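/- Let a > 2 be real, R(t) = e^{−it}/(t − ia) + 1, and let Log denote the principal branch of the complex logarithm. Then for every complex z with Im(z) < 0, the function t ↦ Log(R(t))/(t − z) is integrable on ℝ and (1/(2πi)) ∫_ℝ Log(R(t))/(t − z) dt = −Log(R(z)). -/

import Mathlib

/-!
For `a ≥ 2` and `Im w ≤ 0` we have `‖R w - 1‖ ≤ 1/‖w - ia‖ ≤ 1/2`, so `Log R` is holomorphic on the
closed lower half-plane with `‖Log R w‖ ≤ 3/(2‖w - ia‖)`; in particular `Log R(t)/(t - z)` is
`O(1/t²)` on `ℝ`. Cauchy's formula on the rectangle `[-r, r] × [-r, 0]` (Goursat for the difference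
quotient `dslope (Log ∘ R) z`, plus `∮ dw/(w - z) = 2πi`) writes `∫_{-r}^{r} Log R(t)/(t - z) dt` as
`-2πi Log R(z)` plus the integrals over the three other sides, of total length `4r`, on which the
integrand is `O(1/r²)`. Letting `r → ∞` gives the formula.
-/

open Complex MeasureTheory Real Set Filter Topology Interval

/-- Counterclockwise when `z` is the lower left corner; this is the expression of
`Complex.integral_boundary_rect_eq_zero_of_differentiableOn`. -/
noncomputable def rectBoundaryIntegral (f : ℂ → ℂ) (z w : ℂ) : ℂ :=
  (∫ x : ℝ in z.re..w.re, f (x + z.im * I)) - (∫ x : ℝ in z.re..w.re, f (x + w.im * I)) +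
    I * (∫ y : ℝ in z.im..w.im, f (w.re + y * I)) - I * ∫ y : ℝ in z.im..w.im, f (z.re + y * I)

theorem Complex.log_sub_log_neg_of_im_pos {u : ℂ} (hu : 0 < u.im) :
    log u - log (-u) = π * I := by
  apply Complex.ext <;> simp [log_re, log_im, arg_neg_eq_arg_sub_pi_of_im_pos hu]

theorem integral_div_mul_add_eq_log_sub {d e : ℂ} {A B : ℝ}
    (h : ∀ x ∈ uIcc A B, x * d + e ∈ slitPlane) :
    ∫ x in A..B, d / (x * d + e) = log (B * d + e) - log (A * d + e) := by
  refine intervalIntegral.integral_eq_sub_of_hasDerivAt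
    (f := fun x : ℝ => log (x * d + e)) (fun x hx => ?_) ?_
  · have : HasDerivAt (fun x : ℝ => (x : ℂ) * d + e) d x := by
      simpa using ((hasDerivAt_id x).ofReal_comp.mul_const d).add_const e
    exact this.clog_real (h x hx)
  · exact ContinuousOn.intervalIntegrable
      (continuousOn_const.div (by fun_prop) fun x hx => slitPlane_ne_zero (h x hx))

theorem rectBoundaryIntegral_sub_inv {p q z : ℂ} (hre : z.re ∈ Ioo p.re q.re)
    (him : z.im ∈ Ioo p.im q.im) :
    rectBoundaryIntegral (fun w => (w - z)⁻¹) p q = 2 * π * I := by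
  obtain ⟨hre₁, hre₂⟩ := hre
  obtain ⟨him₁, him₂⟩ := him
  have horizontal (c : ℝ) (hc : c ≠ z.im) : ∫ x in p.re..q.re, ((x : ℂ) + c * I - z)⁻¹ =
      log (q.re + c * I - z) - log (p.re + c * I - z) := by
    convert integral_div_mul_add_eq_log_sub (d := 1) (e := c * I - z) (A := p.re) (B := q.re)
      (fun x _ => ?_) using 1
    · congr 1; ext x; rw [one_div, mul_one, add_sub_assoc]
    · ring_nf
    · refine mem_slitPlane_iff.2 (Or.inr ?_)
      simpa [sub_eq_zero] using hc
  -- on a vertical side, `c + yI - z` multiplied by the sign `s` of `c - z.re` avoids the slit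
  have vertical (c s : ℝ) (hc : 0 < s * (c - z.re)) :
      I * ∫ y in p.im..q.im, ((c : ℂ) + y * I - z)⁻¹ =
        log (s * (c + q.im * I - z)) - log (s * (c + p.im * I - z)) := by
    have hs : (s : ℂ) ≠ 0 := ofReal_ne_zero.2 (by rintro rfl; simp at hc)
    rw [← intervalIntegral.integral_const_mul]
    convert integral_div_mul_add_eq_log_sub (d := s * I) (e := s * (c - z)) (A := p.im) (B := q.im)
      (fun y _ => ?_) using 1
    · congr 1; ext y
      rw [show (y : ℂ) * (s * I) + s * (c - z) = s * (c + y * I - z) by ring,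
        mul_div_mul_left _ _ hs, div_eq_mul_inv]
    · ring_nf
    · exact mem_slitPlane_iff.2 (Or.inl (by simpa using hc))
  simp only [rectBoundaryIntegral]
  rw [horizontal p.im him₁.ne, horizontal q.im him₂.ne', vertical q.re 1 (by linarith),
    vertical p.re (-1) (by linarith)]
  have h₁ := log_sub_log_neg_of_im_pos (u := p.re + q.im * I - z) (by simpa using him₂)
  have h₂ := log_sub_log_neg_of_im_pos (u := -(p.re + p.im * I - z)) (by simpa using him₁)
  push_cast
  simp only [one_mul, neg_one_mul, neg_neg] at *
  linear_combination h₁ + h₂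

theorem intervalIntegral_dslope_comp_eq {f : ℂ → ℂ} {γ : ℝ → ℂ} {z : ℂ} {A B : ℝ}
    (hγ : ContinuousOn γ (uIcc A B)) (hfγ : ContinuousOn (fun x => f (γ x)) (uIcc A B))
    (hz : ∀ x ∈ uIcc A B, γ x ≠ z) :
    ∫ x in A..B, dslope f z (γ x) =
      (∫ x in A..B, f (γ x) / (γ x - z)) - f z * ∫ x in A..B, (γ x - z)⁻¹ := by
  have hne : ∀ x ∈ uIcc A B, γ x - z ≠ 0 := fun x hx => sub_ne_zero.2 (hz x hx)
  have hγz : ContinuousOn (fun x => γ x - z) (uIcc A B) := hγ.sub continuousOn_const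
  rw [← intervalIntegral.integral_const_mul, ← intervalIntegral.integral_sub
    (ContinuousOn.intervalIntegrable (u := fun x => f (γ x) / (γ x - z)) (hfγ.div hγz hne))
    (ContinuousOn.intervalIntegrable (u := fun x => f z * (γ x - z)⁻¹)
      (continuousOn_const.mul (hγz.inv₀ hne)))]
  refine intervalIntegral.integral_congr fun x hx => ?_
  simp only [dslope_of_ne _ (hz x hx), slope_def_field]
  field_simp [hne x hx]

theorem rectBoundaryIntegral_div_sub {f : ℂ → ℂ} {p q z : ℂ}
    (hf : DifferentiableOn ℂ f ([[p.re, q.re]] ×ℂ [[p.im, q.im]]))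
    (hre : z.re ∈ Ioo p.re q.re) (him : z.im ∈ Ioo p.im q.im) :
    rectBoundaryIntegral (fun w => f w / (w - z)) p q = 2 * π * I * f z := by
  have hnhds : [[p.re, q.re]] ×ℂ [[p.im, q.im]] ∈ 𝓝 z :=
    mem_of_superset ((isOpen_Ioo.reProdIm isOpen_Ioo).mem_nhds ⟨hre, him⟩)
      (reProdIm_subset_iff'.2 (Or.inl ⟨Ioo_subset_Icc_self.trans Icc_subset_uIcc,
        Ioo_subset_Icc_self.trans Icc_subset_uIcc⟩))
  have hgoursat : rectBoundaryIntegral (dslope f z) p q = 0 :=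
    integral_boundary_rect_eq_zero_of_differentiableOn _ p q ((differentiableOn_dslope hnhds).2 hf)
  have side (γ : ℝ → ℂ) (A B : ℝ) (hγ : Continuous γ)
      (hmem : ∀ x ∈ uIcc A B, γ x ∈ [[p.re, q.re]] ×ℂ [[p.im, q.im]] ∧ γ x ≠ z) :
      ∫ x in A..B, dslope f z (γ x) =
        (∫ x in A..B, f (γ x) / (γ x - z)) - f z * ∫ x in A..B, (γ x - z)⁻¹ :=
    intervalIntegral_dslope_comp_eq hγ.continuousOn
      (hf.continuousOn.comp hγ.continuousOn fun x hx => (hmem x hx).1) fun x hx => (hmem x hx).2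
  simp only [rectBoundaryIntegral] at hgoursat ⊢
  rw [side _ _ _ (by fun_prop) fun x hx => ⟨?_, ?_⟩, side _ _ _ (by fun_prop) fun x hx => ⟨?_, ?_⟩,
    side _ _ _ (by fun_prop) fun x hx => ⟨?_, ?_⟩,
    side _ _ _ (by fun_prop) fun x hx => ⟨?_, ?_⟩] at hgoursat
  · have := rectBoundaryIntegral_sub_inv hre him
    simp only [rectBoundaryIntegral] at this
    linear_combination hgoursat + f z * this
  all_goals first
    | simp [mem_reProdIm, hx]; done
    | simp only [ne_eq, Complex.ext_iff, add_re, add_im, ofReal_re, ofReal_im, mul_re, mul_im,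
        I_re, I_im]
      grind [him.1, him.2, hre.1, hre.2]

theorem mul_one_add_abs_le_norm_ofReal_sub (t : ℝ) (u : ℂ) :
    |u.im| * (1 + |t|) ≤ (1 + 2 * ‖u‖) * ‖(t : ℂ) - u‖ := by
  have him : |u.im| ≤ ‖(t : ℂ) - u‖ := by simpa using abs_im_le_norm ((t : ℂ) - u)
  have hre : |t| - ‖u‖ ≤ ‖(t : ℂ) - u‖ := by simpa using norm_sub_norm_le (t : ℂ) u
  nlinarith [abs_im_le_norm u, abs_nonneg u.im, norm_nonneg u]

theorem integrable_inv_norm_ofReal_sub_mul {u v : ℂ} (hu : u.im ≠ 0) (hv : v.im ≠ 0) :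
    Integrable fun t : ℝ => (‖(t : ℂ) - u‖ * ‖(t : ℂ) - v‖)⁻¹ := by
  refine (integrable_inv_one_add_sq.const_mul
    ((1 + 2 * ‖u‖) * (1 + 2 * ‖v‖) / (|u.im| * |v.im|))).mono' (by fun_prop)
    (Eventually.of_forall fun t => ?_)
  have hu' := mul_one_add_abs_le_norm_ofReal_sub t u
  have hv' := mul_one_add_abs_le_norm_ofReal_sub t v
  have hsq : 1 + t ^ 2 ≤ (1 + |t|) ^ 2 := by nlinarith [abs_nonneg t, sq_abs t]
  have hpos : 0 < |u.im| * |v.im| := by positivity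
  have hne (w : ℂ) (hw : w.im ≠ 0) : 0 < ‖(t : ℂ) - w‖ :=
    norm_pos_iff.2 (sub_ne_zero.2 fun h => hw (by simpa using (congrArg im h).symm))
  rw [Real.norm_of_nonneg (by positivity), ← div_eq_mul_inv,
    inv_le_comm₀ (mul_pos (hne u hu) (hne v hv)) (by positivity), inv_div,
    div_le_iff₀ (by positivity), mul_div_assoc', le_div_iff₀ hpos]
  calc (1 + t ^ 2) * (|u.im| * |v.im|) ≤ (|u.im| * (1 + |t|)) * (|v.im| * (1 + |t|)) := by
        nlinarith
    _ ≤ ((1 + 2 * ‖u‖) * ‖(t : ℂ) - u‖) * ((1 + 2 * ‖v‖) * ‖(t : ℂ) - v‖) :=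
        mul_le_mul hu' hv' (by positivity) (by positivity)
    _ = _ := by ring

noncomputable def R (a : ℝ) (w : ℂ) : ℂ := exp (-I * w) / (w - I * a) + 1

section LowerHalfPlane

variable {a : ℝ} {w : ℂ}

theorem le_norm_sub_I_mul (hw : w.im ≤ 0) : a ≤ ‖w - I * a‖ := by
  have := abs_im_le_norm (w - I * a)
  simp only [sub_im, mul_im, I_re, I_im, ofReal_re, ofReal_im, zero_mul, one_mul, zero_add,
    abs_sub_comm] at this
  linarith [le_abs_self (a - w.im)]

theorem norm_le_norm_sub_I_mul (ha : 0 ≤ a) (hw : w.im ≤ 0) : ‖w‖ ≤ ‖w - I * a‖ := by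
  rw [← sq_le_sq₀ (norm_nonneg _) (norm_nonneg _), Complex.sq_norm, Complex.sq_norm, normSq_apply,
    normSq_apply]
  simp only [sub_re, sub_im, mul_re, mul_im, I_re, I_im, ofReal_re, ofReal_im]
  nlinarith

theorem norm_R_sub_one_le (hw : w.im ≤ 0) : ‖R a w - 1‖ ≤ ‖w - I * a‖⁻¹ := by
  have hexp : ‖exp (-I * w)‖ ≤ 1 := by
    rw [norm_exp]
    exact Real.exp_le_one_iff.2 (by simpa using hw)
  rw [R, add_sub_cancel_right, norm_div, ← one_div]
  exact div_le_div_of_nonneg_right hexp (norm_nonneg _)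

theorem norm_R_sub_one_le_inv (ha : 0 < a) (hw : w.im ≤ 0) : ‖R a w - 1‖ ≤ a⁻¹ :=
  (norm_R_sub_one_le hw).trans (inv_anti₀ ha (le_norm_sub_I_mul hw))

theorem R_mem_slitPlane (ha : 1 < a) (hw : w.im ≤ 0) : R a w ∈ slitPlane := by
  simpa using mem_slitPlane_of_norm_lt_one
    ((norm_R_sub_one_le_inv (by linarith) hw).trans_lt (inv_lt_one_of_one_lt₀ ha))

theorem differentiableAt_log_R (ha : 1 < a) (hw : w.im ≤ 0) :
    DifferentiableAt ℂ (fun u => log (R a u)) w := by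
  have hden : w - I * a ≠ 0 :=
    norm_pos_iff.1 (lt_of_lt_of_le (by linarith) (le_norm_sub_I_mul hw))
  refine DifferentiableAt.clog ?_ (R_mem_slitPlane ha hw)
  unfold R
  fun_prop (disch := exact hden)

theorem norm_log_R_le (ha : 2 ≤ a) (hw : w.im ≤ 0) :
    ‖log (R a w)‖ ≤ 3 / 2 * ‖w - I * a‖⁻¹ := by
  have hhalf : ‖R a w - 1‖ ≤ 1 / 2 :=
    (norm_R_sub_one_le_inv (by linarith) hw).trans (by rw [one_div]; exact inv_anti₀ two_pos ha)
  calc ‖log (R a w)‖ = ‖log (1 + (R a w - 1))‖ := by rw [add_sub_cancel]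
    _ ≤ 3 / 2 * ‖R a w - 1‖ := norm_log_one_add_half_le_self hhalf
    _ ≤ 3 / 2 * ‖w - I * a‖⁻¹ := by gcongr; exact norm_R_sub_one_le hw

end LowerHalfPlane

theorem continuous_log_R_div_ofReal_sub {a : ℝ} {z : ℂ} (ha : 1 < a) (hz : z.im ≠ 0) :
    Continuous fun t : ℝ => log (R a t) / (t - z) := by
  refine continuous_iff_continuousAt.2 fun t => ContinuousAt.div ?_ (by fun_prop) ?_
  · exact (differentiableAt_log_R ha (by simp)).continuousAt.comp continuous_ofReal.continuousAt
  · exact sub_ne_zero.2 fun h => hz (by simpa using (congrArg im h).symm)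

theorem integrable_log_R_div_ofReal_sub {a : ℝ} {z : ℂ} (ha : 2 ≤ a) (hz : z.im ≠ 0) :
    Integrable fun t : ℝ => log (R a t) / (t - z) := by
  refine ((integrable_inv_norm_ofReal_sub_mul (u := I * a) (by simp; linarith) hz).const_mul
    (3 / 2)).mono' (continuous_log_R_div_ofReal_sub (by linarith) hz).aestronglyMeasurable
    (Eventually.of_forall fun t => ?_)
  rw [norm_div, mul_inv, ← mul_assoc, div_eq_mul_inv]
  gcongr
  exact norm_log_R_le ha (by simp)

theorem norm_log_R_div_sub_le {a r : ℝ} {z w : ℂ} (ha : 2 ≤ a) (hr : 0 < r) (hz : 2 * ‖z‖ ≤ r)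
    (hw : w.im ≤ 0) (hrw : r ≤ ‖w‖) : ‖log (R a w) / (w - z)‖ ≤ 3 / r ^ 2 := by
  have hnum : ‖log (R a w)‖ ≤ 3 / 2 * r⁻¹ :=
    (norm_log_R_le ha hw).trans (by
      gcongr; exact hrw.trans (norm_le_norm_sub_I_mul (by linarith) hw))
  have hden : r / 2 ≤ ‖w - z‖ := by linarith [norm_sub_norm_le w z]
  rw [norm_div]
  calc ‖log (R a w)‖ / ‖w - z‖ ≤ 3 / 2 * r⁻¹ / (r / 2) := by gcongr
    _ = 3 / r ^ 2 := by field_simp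

theorem norm_intervalIntegral_log_R_div_add_le {a r : ℝ} {z : ℂ} (ha : 2 ≤ a) (hz : z.im < 0)
    (hr : 2 * ‖z‖ < r) :
    ‖(∫ x in -r..r, log (R a x) / (x - z)) + 2 * π * I * log (R a z)‖ ≤ 12 / r := by
  have hr₀ : 0 < r := by linarith [norm_nonneg z]
  have hzr : ‖z‖ < r := by linarith [norm_nonneg z]
  have hcauchy := rectBoundaryIntegral_div_sub (f := fun w => log (R a w)) (p := ⟨-r, -r⟩)
    (q := ⟨r, 0⟩) (z := z) (fun w hw => ?_) ?_ ?_
  rotate_left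
  · have him : w.im ≤ max (-r) 0 := hw.2.2
    exact (differentiableAt_log_R (by linarith)
      (him.trans_eq (max_eq_right (by linarith)))).differentiableWithinAt
  · exact abs_lt.1 ((abs_re_le_norm z).trans_lt hzr)
  · exact ⟨(abs_lt.1 ((abs_im_le_norm z).trans_lt hzr)).1, hz⟩
  have side (γ : ℝ → ℂ) (A B : ℝ) (hγ : ∀ x ∈ Ι A B, (γ x).im ≤ 0 ∧ r ≤ ‖γ x‖) :
      ‖∫ x in A..B, log (R a (γ x)) / (γ x - z)‖ ≤ 3 / r ^ 2 * |B - A| :=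
    intervalIntegral.norm_integral_le_of_norm_le_const fun x hx =>
      norm_log_R_div_sub_le ha hr₀ hr.le (hγ x hx).1 (hγ x hx).2
  have hbottom := side (fun x => x + (-r : ℝ) * I) (-r) r fun x _ => ⟨by simp; linarith,
    by simpa [abs_of_pos hr₀] using abs_im_le_norm ((x : ℂ) + (-r : ℝ) * I)⟩
  have hright := side (fun y => (r : ℝ) + y * I) (-r) 0 fun y hy =>
    ⟨by simpa using hy.2.trans_eq (max_eq_right (by linarith)),
      by simpa [abs_of_pos hr₀] using abs_re_le_norm (((r : ℝ) : ℂ) + y * I)⟩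
  have hleft := side (fun y => (-r : ℝ) + y * I) (-r) 0 fun y hy =>
    ⟨by simpa using hy.2.trans_eq (max_eq_right (by linarith)),
      by simpa [abs_of_pos hr₀] using abs_re_le_norm (((-r : ℝ) : ℂ) + y * I)⟩
  simp only [rectBoundaryIntegral, ofReal_zero, zero_mul, add_zero] at hcauchy
  set bottom := ∫ x in -r..r, log (R a (x + (-r : ℝ) * I)) / (x + (-r : ℝ) * I - z)
  set right := ∫ y in -r..0, log (R a ((r : ℝ) + y * I)) / ((r : ℝ) + y * I - z)
  set left := ∫ y in -r..0, log (R a ((-r : ℝ) + y * I)) / ((-r : ℝ) + y * I - z)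
  calc _ = ‖bottom + I * right - I * left‖ := by congr 1; linear_combination -hcauchy
    _ ≤ ‖bottom‖ + ‖right‖ + ‖left‖ := by
      refine (norm_sub_le _ _).trans ?_
      simpa [norm_mul] using norm_add_le bottom (I * right)
    _ ≤ 3 / r ^ 2 * |r - -r| + 3 / r ^ 2 * |0 - -r| + 3 / r ^ 2 * |0 - -r| := by gcongr
    _ = 12 / r := by
      rw [abs_of_pos (by linarith), abs_of_pos (by linarith)]
      field_simp
      ring

/-- For `a > 2`, `R(t) = e^{−it}/(t − ia) + 1`, and `Im z < 0`, the function
`t ↦ Log(R t)/(t − z)` is integrable on `ℝ` and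
`(1/(2πi)) ∫ Log(R t)/(t − z) dt = −Log(R z)`. -/
theorem integral_log_R_lower (a : ℝ) (ha : 2 < a) (z : ℂ) (hz : z.im < 0) :
    Integrable (fun t : ℝ =>
      Complex.log (Complex.exp (-Complex.I * t) / ((t : ℂ) - Complex.I * a) + 1) /
        ((t : ℂ) - z)) ∧
    (1 / (2 * (π : ℂ) * Complex.I)) * (∫ t : ℝ,
      Complex.log (Complex.exp (-Complex.I * t) / ((t : ℂ) - Complex.I * a) + 1) /
        ((t : ℂ) - z)) =
      -Complex.log (Complex.exp (-Complex.I * z) / (z - Complex.I * a) + 1) := by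
  have hint := integrable_log_R_div_ofReal_sub ha.le hz.ne
  refine ⟨hint, ?_⟩
  have hsymm := intervalIntegral_tendsto_integral hint tendsto_neg_atTop_atBot tendsto_id
  have hcontour : Tendsto (fun r => ∫ x in -r..r, log (R a x) / (x - z)) atTop
      (𝓝 (-(2 * π * I * log (R a z)))) := by
    refine tendsto_sub_nhds_zero_iff.1 (squeeze_zero_norm' ?_
      ((tendsto_const_nhds (x := (12 : ℝ))).div_atTop tendsto_id))
    filter_upwards [eventually_gt_atTop (2 * ‖z‖)] with r hr
    simpa using norm_intervalIntegral_log_R_div_add_le ha.le hz hr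
  change 1 / (2 * π * I) * ∫ t : ℝ, log (R a t) / (t - z) = -log (R a z)
  rw [tendsto_nhds_unique hsymm hcontour]
  field_simp
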